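/- Define h : ℝ → ℝ by h(r) = (sinh(√6·r) − 9·sinh((4/√6)·r) + 45·sinh((2/√6)·r) − (60/√6)·r)·exp(−(6·√3/√7)·r). Then h(r) > 0 for all r > 0, h(r) → 0 as r → ∞, and h attains a global maximum on (0, ∞); that is, there exists C > 0 such that h(C) ≥ h(r) for all r > 0. -/

import Mathlib

/-!
In the variable `s = r / √6` the bracket becomes `Q s = sinh 6s - 9 sinh 4s + 45 sinh 2s - 60 s`,
with `Q 0 = Q' 0 = 0` and `Q'' s = 144 sinh 2s (cosh 2s - 1)²`, so `Q` is positive for `s > 0`.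
The exponential factor is `exp (-a s)` with `a = 6√3/√7 · √6 > 6`, which beats every term of `Q`,
so `h → 0`. A continuous function that vanishes at `0`, is positive on `(0, ∞)` and tends to `0`
at infinity attains its supremum there.
-/

open Real Filter Set Topology

lemma pos_of_hasDerivAt_pos {f f' : ℝ → ℝ} (hf : ∀ x, HasDerivAt f (f' x) x) (h0 : f 0 = 0)
    (hf' : ∀ x, 0 < x → 0 < f' x) {x : ℝ} (hx : 0 < x) : 0 < f x := by
  have hmono : StrictMonoOn f (Ici 0) := by
    refine strictMonoOn_of_deriv_pos (convex_Ici 0)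
      (fun y _ => (hf y).continuousAt.continuousWithinAt) fun y hy => ?_
    rw [(hf y).deriv]
    exact hf' y (by simpa using hy)
  simpa [h0] using hmono self_mem_Ici hx.le hx

lemma exists_isMaxOn_Ioi_of_tendsto_zero {f : ℝ → ℝ} {a : ℝ} (hf : ContinuousOn f (Ici a))
    (ha : f a ≤ 0) (hpos : ∀ r, a < r → 0 < f r) (hlim : Tendsto f atTop (𝓝 0)) :
    ∃ C, a < C ∧ ∀ r, a < r → f r ≤ f C := by
  have h1 : 0 < f (a + 1) := hpos _ (lt_add_one a)
  have hfar : ∀ᶠ r in cocompact ℝ ⊓ 𝓟 (Ici a), f r ≤ f (a + 1) := by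
    rw [cocompact_eq_atBot_atTop, eventually_inf_principal, eventually_sup]
    exact ⟨(eventually_lt_atBot a).mono fun r hr hr' => absurd hr' (not_le.2 hr),
      (hlim.eventually (ge_mem_nhds h1)).mono fun r hr _ => hr⟩
  obtain ⟨C, hCa, hC⟩ := hf.exists_isMaxOn' isClosed_Ici (le_of_lt (lt_add_one a)) hfar
  refine ⟨C, lt_of_le_of_ne hCa ?_, fun r hr => hC (mem_Ici.2 hr.le)⟩
  rintro rfl
  exact (h1.trans_le (hC (mem_Ici.2 (lt_add_one a).le))).not_ge ha

lemma tendsto_exp_mul_atTop_nhds_zero {c : ℝ} (hc : c < 0) :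
    Tendsto (fun r => exp (c * r)) atTop (𝓝 0) :=
  tendsto_exp_atBot.comp (tendsto_id.const_mul_atTop_of_neg hc)

lemma tendsto_sinh_mul_mul_exp_neg_mul_atTop_nhds_zero {a b : ℝ} (hab : |b| < a) :
    Tendsto (fun r => sinh (b * r) * exp (-a * r)) atTop (𝓝 0) := by
  obtain ⟨hba, hba'⟩ := abs_lt.1 hab
  have hsplit : ∀ r, sinh (b * r) * exp (-a * r)
      = (exp ((b - a) * r) - exp ((-b - a) * r)) / 2 := fun r => by
    rw [sinh_eq, div_mul_eq_mul_div, sub_mul, ← exp_add, ← exp_add]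
    ring_nf
  simpa only [hsplit, sub_zero, zero_div] using
    ((tendsto_exp_mul_atTop_nhds_zero (by linarith : b - a < 0)).sub
      (tendsto_exp_mul_atTop_nhds_zero (by linarith : -b - a < 0))).div_const 2

noncomputable def sinhCombination (s : ℝ) : ℝ :=
  sinh (6 * s) - 9 * sinh (4 * s) + 45 * sinh (2 * s) - 60 * s

lemma hasDerivAt_sinhCombination (s : ℝ) :
    HasDerivAt sinhCombination
      (6 * cosh (6 * s) - 36 * cosh (4 * s) + 90 * cosh (2 * s) - 60) s := by
  have hlin (c : ℝ) : HasDerivAt (fun x : ℝ => c * x) c s := by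
    simpa using (hasDerivAt_id s).const_mul c
  refine ((((hlin 6).sinh.sub ((hlin 4).sinh.const_mul 9)).add
    ((hlin 2).sinh.const_mul 45)).sub (hlin 60)).congr_deriv ?_
  ring

lemma hasDerivAt_sinhCombination_deriv (s : ℝ) :
    HasDerivAt (fun x => 6 * cosh (6 * x) - 36 * cosh (4 * x) + 90 * cosh (2 * x) - 60)
      (36 * sinh (6 * s) - 144 * sinh (4 * s) + 180 * sinh (2 * s)) s := by
  have hlin (c : ℝ) : HasDerivAt (fun x : ℝ => c * x) c s := by
    simpa using (hasDerivAt_id s).const_mul c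
  refine (((((hlin 6).cosh.const_mul 6).sub ((hlin 4).cosh.const_mul 36)).add
    ((hlin 2).cosh.const_mul 90)).sub_const 60).congr_deriv ?_
  ring

lemma sinhCombination_deriv2_eq (s : ℝ) :
    36 * sinh (6 * s) - 144 * sinh (4 * s) + 180 * sinh (2 * s)
      = 144 * sinh (2 * s) * (cosh (2 * s) - 1) ^ 2 := by
  have h6 : sinh (6 * s) = 4 * sinh (2 * s) ^ 3 + 3 * sinh (2 * s) := by
    rw [show 6 * s = 3 * (2 * s) by ring, sinh_three_mul]
  have h4 : sinh (4 * s) = 2 * sinh (2 * s) * cosh (2 * s) := by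
    rw [show 4 * s = 2 * (2 * s) by ring, sinh_two_mul]
  linear_combination 36 * h6 - 144 * h4 - 144 * sinh (2 * s) * cosh_sq (2 * s)

lemma sinhCombination_pos {s : ℝ} (hs : 0 < s) : 0 < sinhCombination s := by
  refine pos_of_hasDerivAt_pos hasDerivAt_sinhCombination (by simp [sinhCombination])
    (fun t ht => pos_of_hasDerivAt_pos hasDerivAt_sinhCombination_deriv (by norm_num)
      (fun u hu => ?_) ht) hs
  have hsinh : 0 < sinh (2 * u) := sinh_pos_iff.2 (by positivity)
  have hcosh : 1 < cosh (2 * u) := one_lt_cosh.2 (by positivity)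
  rw [sinhCombination_deriv2_eq]
  have : 0 < cosh (2 * u) - 1 := sub_pos.2 hcosh
  positivity

lemma tendsto_sinhCombination_mul_exp_neg_mul_atTop_nhds_zero {a : ℝ} (ha : 6 < a) :
    Tendsto (fun s => sinhCombination s * exp (-a * s)) atTop (𝓝 0) := by
  have hsinh (b : ℝ) (hb : |b| ≤ 6) :=
    tendsto_sinh_mul_mul_exp_neg_mul_atTop_nhds_zero (a := a) (b := b) (by linarith)
  have hlin := tendsto_rpow_mul_exp_neg_mul_atTop_nhds_zero 1 a (by linarith)
  simp only [rpow_one] at hlin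
  simpa [sinhCombination, sub_mul, add_mul, mul_assoc] using
    ((((hsinh 6 (by norm_num)).sub ((hsinh 4 (by norm_num)).const_mul 9)).add
      ((hsinh 2 (by norm_num)).const_mul 45)).sub (hlin.const_mul 60))

lemma six_lt_six_mul_sqrt_three_div_sqrt_seven_mul_sqrt_six :
    (6 : ℝ) < 6 * √3 / √7 * √6 := by
  rw [div_mul_eq_mul_div, lt_div_iff₀ (by positivity), mul_assoc, ← sqrt_mul (by norm_num)]
  gcongr
  norm_num

theorem einstein_radius_function (h : ℝ → ℝ)
    (hdef : ∀ r : ℝ, h r =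
      (Real.sinh (Real.sqrt 6 * r) - 9 * Real.sinh ((4 / Real.sqrt 6) * r)
          + 45 * Real.sinh ((2 / Real.sqrt 6) * r) - (60 / Real.sqrt 6) * r)
        * Real.exp (-(6 * Real.sqrt 3 / Real.sqrt 7) * r)) :
    (∀ r : ℝ, 0 < r → 0 < h r) ∧
      Filter.Tendsto h Filter.atTop (nhds 0) ∧
      ∃ C : ℝ, 0 < C ∧ ∀ r : ℝ, 0 < r → h r ≤ h C := by
  have hs6 : 0 < √6 := by positivity
  have hscale :
      h = fun r => sinhCombination (r / √6) * exp (-(6 * √3 / √7 * √6) * (r / √6)) := by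
    funext r
    have h6 : 6 * (r / √6) = √6 * r := by
      field_simp
      rw [sq_sqrt (by norm_num), mul_comm]
    rw [hdef, sinhCombination, h6]
    field_simp
  have hpos (r : ℝ) (hr : 0 < r) : 0 < h r := by
    rw [hscale]
    exact mul_pos (sinhCombination_pos (by positivity)) (exp_pos _)
  have hlim : Tendsto h atTop (𝓝 0) := by
    rw [hscale]
    exact (tendsto_sinhCombination_mul_exp_neg_mul_atTop_nhds_zero
      six_lt_six_mul_sqrt_three_div_sqrt_seven_mul_sqrt_six).comp (tendsto_id.atTop_div_const hs6)
  refine ⟨hpos, hlim, exists_isMaxOn_Ioi_of_tendsto_zero ?_ (by simp [hdef]) hpos hlim⟩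
  rw [funext hdef]
  fun_prop
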